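/- (Theorem 3.3 of the paper, case R = Λ/(ϖ^n).) Let n ≥ 1, let ā be the image in O_L/ϖ^n O_L of an element a ∈ O_L with ϖ ∣ a, and let (F_m)_{m≥0} be a sequence in R_n satisfying F_{m+1} ≡ ā·F_m − Φ̄_m·F_{m−1} (mod ω̄_m·R_n) for every m ≥ 1. Then there exists a unique pair (F^♯, F^♭) ∈ R_n × R_n such that for every m ≥ 1, H̄_m·(F^♯, F^♭)ᵀ ≡ (F_m, −Φ̄_m·F_{m−1})ᵀ (mod ω̄_m·R_n). -/

import Mathlib

open PowerSeries

/-- `ω_m = (1+X)^{p^m} − 1`. -/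
noncomputable def omegaPS (p : ℕ) (R : Type*) [CommRing R] (m : ℕ) : PowerSeries R :=
  (1 + PowerSeries.X) ^ (p ^ m) - 1

/-- `Φ_m = Σ_{i<p} (1+X)^{i·p^{m−1}}` (meaningful for `m ≥ 1`). -/
noncomputable def PhiPS (p : ℕ) (R : Type*) [CommRing R] (m : ℕ) : PowerSeries R :=
  ∑ i ∈ Finset.range p, (1 + PowerSeries.X) ^ (i * p ^ (m - 1))

/-- The matrix `C_j = ((a, 1), (−Φ_j, 0))`. -/
noncomputable def Cmat (p : ℕ) (R : Type*) [CommRing R] (a : R) (j : ℕ) :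
    Matrix (Fin 2) (Fin 2) (PowerSeries R) :=
  !![PowerSeries.C (R := R) a, 1; -(PhiPS p R j), 0]

/-- `H_m = C_m · C_{m−1} ⋯ C_1` (with `H_0 = 1`). -/
noncomputable def Hmat (p : ℕ) (R : Type*) [CommRing R] (a : R) :
    ℕ → Matrix (Fin 2) (Fin 2) (PowerSeries R)
  | 0 => 1
  | m + 1 => Cmat p R a (m + 1) * Hmat p R a m

/-- A sequence `(F_m)_{m≥0}` in `Λ` is norm-compatible for `a` if
`F_{m+1} ≡ a·F_m − Φ_m·F_{m−1} (mod ω_m·Λ)` for every `m ≥ 1`. -/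
def NormCompat (p : ℕ) (R : Type*) [CommRing R] (a : R) (F : ℕ → PowerSeries R) : Prop :=
  ∀ m : ℕ, 1 ≤ m →
    omegaPS p R m ∣ (F (m + 1) - (PowerSeries.C (R := R) a * F m - PhiPS p R m * F (m - 1)))


/-!
Work over any commutative ring `A` in which `a` and `p` are nilpotent. Every `C_j` reduces modulo
`X` to the nilpotent matrix `B`, so a product of many consecutive `C_j` is divisible by a high power
of `X`. Since `(1 + X)^{p^m} ≡ 1 + X^{p^m}` modulo `p`, `ω_m` divides a power of `X`, hence so does
`det H_m = ω_m / X`, which is therefore a nonzerodivisor.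

Uniqueness: if `H_m δ ≡ 0 (mod ω_m)`, multiplying by `adj H_m` and cancelling `det H_m` gives
`δ = X · adj (H_m) c`, which is divisible by a power of `X` that grows with `m`.
Existence: exact solutions of the level-`m` equations, corrected from one level to the next,
converge `X`-adically; the limit solves each level because `ω_m` divides a power of `X`.
-/

open PowerSeries Matrix

section Algebra

variable {p : ℕ} {A : Type*} [CommRing A] {a : A}

lemma Hmat_succ (m : ℕ) : Hmat p A a (m + 1) = Cmat p A a (m + 1) * Hmat p A a m := rfl

lemma omegaPS_succ (m : ℕ) : omegaPS p A (m + 1) = PhiPS p A (m + 1) * omegaPS p A m := by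
  have hgeom := geom_sum_mul ((1 + X : A⟦X⟧) ^ p ^ m) p
  simp only [← pow_mul, mul_comm (p ^ m)] at hgeom
  rw [omegaPS, omegaPS, PhiPS, Nat.add_sub_cancel, pow_succ, mul_comm (p ^ m), ← hgeom]

lemma det_Cmat (j : ℕ) : (Cmat p A a j).det = PhiPS p A j := by
  simp [Cmat, det_fin_two]

lemma omegaPS_eq_X_mul_det_Hmat (m : ℕ) : omegaPS p A m = X * (Hmat p A a m).det := by
  induction m with
  | zero => simp [omegaPS, Hmat]
  | succ m ih => rw [omegaPS_succ, ih, Hmat_succ, det_mul, det_Cmat]; ring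

lemma constantCoeff_PhiPS (j : ℕ) : constantCoeff (PhiPS p A j) = p := by
  simp [PhiPS]

variable (p a) in
def Bmat : Matrix (Fin 2) (Fin 2) A := !![a, 1; -(p : A), 0]

lemma Cmat_map_constantCoeff (j : ℕ) : (Cmat p A a j).map constantCoeff = Bmat p a := by
  ext i k
  fin_cases i <;> fin_cases k <;> simp [Cmat, Bmat, constantCoeff_PhiPS]

lemma exists_Hmat_add_eq_mul (m k : ℕ) :
    ∃ G, Hmat p A a (m + k) = G * Hmat p A a m ∧ G.map constantCoeff = Bmat p a ^ k := by
  induction k with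
  | zero => exact ⟨1, by simp, Matrix.map_one _ (map_zero _) (map_one _)⟩
  | succ k ih =>
    obtain ⟨G, hG, hGB⟩ := ih
    refine ⟨Cmat p A a (m + k + 1) * G, by rw [← add_assoc, Hmat_succ, hG, mul_assoc], ?_⟩
    rw [Matrix.map_mul, Cmat_map_constantCoeff, hGB, pow_succ']

end Algebra

section MatrixLemmas

variable {n R : Type*} [Fintype n] [CommRing R]

lemma Matrix.dvd_mulVec_apply {m : Type*} {d : R} {v : n → R} (hv : ∀ j, d ∣ v j)
    (M : Matrix m n R) (i : m) : d ∣ (M *ᵥ v) i :=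
  Finset.dvd_sum fun j _ => dvd_mul_of_dvd_right (hv j) _

variable [DecidableEq n]

lemma Matrix.mul_adjugate_mul (M G : Matrix n n R) :
    M * (G * M).adjugate = M.det • G.adjugate := by
  rw [adjugate_mul_distrib, ← mul_assoc, mul_adjugate, smul_mul_assoc, one_mul]

lemma Matrix.exists_eq_smul_adjugate_mulVec {M : Matrix n n R} (hM : IsLeftRegular M.det)
    {r : R} {v : n → R} (hv : ∀ i, r * M.det ∣ (M *ᵥ v) i) :
    ∃ c, v = r • (M.adjugate *ᵥ c) := by
  choose c hc using hv
  have hadj : M.adjugate *ᵥ (M *ᵥ v) = M.det • v := by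
    rw [mulVec_mulVec, adjugate_mul, smul_mulVec, one_mulVec]
  refine ⟨c, funext fun i => hM ?_⟩
  have hi := congrFun hadj i
  rw [show M *ᵥ v = (r * M.det) • c from funext hc, mulVec_smul] at hi
  simp only [Pi.smul_apply, smul_eq_mul] at hi ⊢
  linear_combination -hi

end MatrixLemmas

section XAdic

variable {R : Type*} [CommRing R]

lemma PowerSeries.eq_zero_of_forall_X_pow_dvd {f : R⟦X⟧} (hf : ∀ k, X ^ k ∣ f) : f = 0 := by
  ext k
  simpa using X_pow_dvd_iff.mp (hf (k + 1)) k (Nat.lt_succ_self k)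

lemma PowerSeries.isLeftRegular_of_dvd_X_pow {d : R⟦X⟧} {k : ℕ} (hd : d ∣ X ^ k) :
    IsLeftRegular d := by
  obtain ⟨u, hu⟩ := hd
  have hX : IsLeftRegular (X ^ k : R⟦X⟧) := X_pow_mul_injective
  rw [hu, mul_comm] at hX
  exact hX.of_mul

lemma Matrix.exists_eq_X_smul_of_map_constantCoeff_eq_zero {m n : Type*} {M : Matrix m n R⟦X⟧}
    (hM : M.map constantCoeff = 0) : ∃ M', M = (X : R⟦X⟧) • M' := by
  have hX : ∀ i j, X ∣ M i j := fun i j => X_dvd_iff.mpr (congrFun (congrFun hM i) j)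
  choose M' hM' using hX
  exact ⟨of M', by ext i j; simp [hM']⟩

variable {ι : Type*} {s : ℕ → ι → R⟦X⟧} {β : ℕ → ℕ}

lemma PowerSeries.X_pow_dvd_sub_of_le (hβ : Monotone β)
    (hs : ∀ j i, X ^ β j ∣ s (j + 1) i - s j i) {j k : ℕ} (hjk : j ≤ k) (i : ι) :
    X ^ β j ∣ s k i - s j i := by
  induction k, hjk using Nat.le_induction with
  | base => simp
  | succ k hjk ih =>
    rw [← sub_add_sub_cancel]
    exact dvd_add ((pow_dvd_pow X (hβ hjk)).trans (hs k i)) ih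

lemma PowerSeries.exists_forall_X_pow_dvd_sub (hβ : Monotone β) (hβ_unbounded : ∀ k, ∃ j, k < β j)
    (hs : ∀ j i, X ^ β j ∣ s (j + 1) i - s j i) :
    ∃ S : ι → R⟦X⟧, ∀ j i, X ^ β j ∣ S i - s j i := by
  choose J hJ using hβ_unbounded
  refine ⟨fun i => mk fun k => coeff k (s (J k) i), fun j i => X_pow_dvd_iff.mpr fun k hk => ?_⟩
  have hcoeff : ∀ l ≤ max j (J k), k < β l → coeff k (s (max j (J k)) i) = coeff k (s l i) :=
    fun l hl hkl => by
      rw [← sub_eq_zero, ← map_sub]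
      exact X_pow_dvd_iff.mp (X_pow_dvd_sub_of_le hβ hs hl i) k hkl
  rw [map_sub, coeff_mk, ← hcoeff j (le_max_left _ _) hk, hcoeff (J k) (le_max_right _ _) (hJ k),
    sub_self]

end XAdic

section Nilpotent

variable {p : ℕ} {A : Type*} [CommRing A] {a : A}

lemma isNilpotent_Bmat (ha : IsNilpotent a) (hp : IsNilpotent (p : A)) :
    IsNilpotent (Bmat p a) := by
  have hsq : Bmat p a ^ 2 = a • Bmat p a - (p : A) • 1 := by
    ext i j
    fin_cases i <;> fin_cases j <;> simp [Bmat, sq] <;> ring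
  have hsmul : ∀ {c : A}, IsNilpotent c → ∀ M : Matrix (Fin 2) (Fin 2) A, IsNilpotent (c • M) :=
    fun ⟨k, hk⟩ M => ⟨k, by rw [smul_pow, hk, zero_smul]⟩
  refine IsNilpotent.of_pow (m := 2) ?_
  rw [hsq]
  exact (((Commute.one_right _).smul_right _).smul_left _).isNilpotent_sub (hsmul ha _) (hsmul hp _)

lemma exists_Hmat_eq_X_pow_smul {N : ℕ} (hN : Bmat p a ^ N = 0) (m : ℕ) :
    ∃ M, Hmat p A a m = (X : A⟦X⟧) ^ (m / N) • M := by
  suffices h : ∀ q r, ∃ M, Hmat p A a (N * q + r) = (X : A⟦X⟧) ^ q • M by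
    simpa only [Nat.div_add_mod] using h (m / N) (m % N)
  intro q r
  induction q with
  | zero => exact ⟨Hmat p A a r, by simp⟩
  | succ q ih =>
    obtain ⟨M, hM⟩ := ih
    obtain ⟨G, hG, hGB⟩ := exists_Hmat_add_eq_mul (p := p) (a := a) (N * q + r) N
    obtain ⟨G', rfl⟩ := exists_eq_X_smul_of_map_constantCoeff_eq_zero (hGB.trans hN)
    refine ⟨G' * M, ?_⟩
    rw [show N * (q + 1) + r = N * q + r + N by ring, hG, hM, smul_mul_smul_comm, pow_succ']

lemma exists_omegaPS_dvd_X_pow (hp : p.Prime) (hpA : IsNilpotent (p : A)) (m : ℕ) :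
    ∃ K, omegaPS p A m ∣ X ^ K := by
  obtain ⟨r, hr⟩ := exists_add_pow_prime_pow_eq hp (1 : A⟦X⟧) X m
  have hpX : IsNilpotent (p : A⟦X⟧) := by simpa using hpA.map (C : A →+* A⟦X⟧)
  obtain ⟨K, hK⟩ := (Commute.all _ _).isNilpotent_mul_right (y := X * r) hpX |>.neg
  refine ⟨p ^ m * K, ?_⟩
  have hdvd := sub_dvd_pow_sub_pow (X ^ p ^ m : A⟦X⟧) (-((p : A⟦X⟧) * (X * r))) K
  rwa [hK, sub_zero, ← pow_mul, sub_neg_eq_add, ← mul_assoc,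
    show X ^ p ^ m + (p : A⟦X⟧) * X * r = omegaPS p A m by rw [omegaPS, hr]; ring] at hdvd

end Nilpotent

section SharpFlat

variable {p : ℕ} {A : Type*} [CommRing A] {a : A} {F : ℕ → A⟦X⟧}

variable (p A a F) in
def IsSharpFlat (v : Fin 2 → A⟦X⟧) : Prop :=
  ∀ m, 1 ≤ m → ∀ i, omegaPS p A m ∣ (Hmat p A a m *ᵥ v - ![F m, -(PhiPS p A m * F (m - 1))]) i

lemma eq_zero_of_forall_omegaPS_dvd_Hmat_mulVec (hp : p.Prime) (ha : IsNilpotent a)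
    (hpA : IsNilpotent (p : A)) {δ : Fin 2 → A⟦X⟧}
    (hδ : ∀ m, 1 ≤ m → ∀ i, omegaPS p A m ∣ (Hmat p A a m *ᵥ δ) i) : δ = 0 := by
  obtain ⟨N, hN⟩ := isNilpotent_Bmat ha hpA
  have hN' : Bmat p a ^ (N + 1) = 0 := by rw [pow_succ, hN, zero_mul]
  funext i
  refine eq_zero_of_forall_X_pow_dvd fun k => ?_
  set m := (N + 1) * k + 1
  obtain ⟨M, hM⟩ := exists_Hmat_eq_X_pow_smul hN' m
  obtain ⟨K, hK⟩ := exists_omegaPS_dvd_X_pow hp hpA m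
  rw [omegaPS_eq_X_mul_det_Hmat (a := a)] at hK
  have hδm := hδ m (Nat.le_add_left 1 _)
  rw [omegaPS_eq_X_mul_det_Hmat (a := a)] at hδm
  obtain ⟨c, rfl⟩ :=
    exists_eq_smul_adjugate_mulVec (isLeftRegular_of_dvd_X_pow (dvd_of_mul_left_dvd hK)) hδm
  have hkm : k ≤ m / (N + 1) := by
    rw [Nat.le_div_iff_mul_le N.succ_pos]
    lia
  rw [hM, adjugate_smul, Fintype.card_fin, pow_one, smul_mulVec, Pi.smul_apply, Pi.smul_apply,
    smul_eq_mul, smul_eq_mul]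
  exact dvd_mul_of_dvd_right (dvd_mul_of_dvd_left (pow_dvd_pow X hkm) _) _

theorem IsSharpFlat.unique (hp : p.Prime) (ha : IsNilpotent a) (hpA : IsNilpotent (p : A))
    {v w : Fin 2 → A⟦X⟧} (hv : IsSharpFlat p A a F v) (hw : IsSharpFlat p A a F w) : v = w := by
  rw [← sub_eq_zero]
  refine eq_zero_of_forall_omegaPS_dvd_Hmat_mulVec hp ha hpA fun m hm i => ?_
  rw [mulVec_sub, ← sub_sub_sub_cancel_right _ _ ![F m, -(PhiPS p A m * F (m - 1))]]
  exact dvd_sub (hv m hm i) (hw m hm i)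

end SharpFlat

section Existence

variable {p : ℕ} {A : Type*} [CommRing A] {a : A} {F g : ℕ → A⟦X⟧}

variable (p A a F g) in
/-- `approxSol j` solves the equations of level `j + 1` exactly. The correction terms do not
disturb the levels `m ≤ j + 1` modulo `ω_m = X · det H_m`: writing `H_{j+1} = G · H_m`,
`H_m · adj (G · H_m) = det H_m · adj G`. -/
noncomputable def approxSol : ℕ → Fin 2 → A⟦X⟧
  | 0 => ![F 0, F 1 - C a * F 0]
  | j + 1 => approxSol j + (X * g j) • ((Hmat p A a (j + 1)).adjugate *ᵥ Pi.single 1 1)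

lemma X_pow_dvd_approxSol_succ_sub {N : ℕ} (hN : Bmat p a ^ N = 0) (j : ℕ) (i : Fin 2) :
    X ^ ((j + 1) / N) ∣ approxSol p A a F g (j + 1) i - approxSol p A a F g j i := by
  obtain ⟨M, hM⟩ := exists_Hmat_eq_X_pow_smul hN (j + 1)
  rw [approxSol, Pi.add_apply, add_sub_cancel_left, hM, adjugate_smul, Fintype.card_fin, pow_one,
    smul_mulVec, Pi.smul_apply, Pi.smul_apply, smul_eq_mul, smul_eq_mul]
  exact dvd_mul_of_dvd_right (dvd_mul_right _ _) _

lemma Hmat_mulVec_approxSol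
    (hg : ∀ j, F (j + 2) - (C a * F (j + 1) - PhiPS p A (j + 1) * F j) =
      omegaPS p A (j + 1) * g j) (j : ℕ) :
    Hmat p A a (j + 1) *ᵥ approxSol p A a F g j = ![F (j + 1), -(PhiPS p A (j + 1) * F j)] := by
  induction j with
  | zero =>
    funext i
    fin_cases i <;> simp [Hmat, Cmat, approxSol, mulVec, dotProduct, Fin.sum_univ_two]
  | succ j ih =>
    have hcorr : Hmat p A a (j + 1) *ᵥ ((X * g j) • ((Hmat p A a (j + 1)).adjugate *ᵥ
        Pi.single 1 1)) = (omegaPS p A (j + 1) * g j) • Pi.single 1 1 := by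
      rw [mulVec_smul, mulVec_mulVec, mul_adjugate, smul_mulVec, one_mulVec, smul_smul,
        omegaPS_eq_X_mul_det_Hmat (a := a)]
      ring_nf
    rw [Hmat_succ, ← mulVec_mulVec, approxSol, mulVec_add, ih, hcorr]
    funext i
    fin_cases i
    · simp [Cmat, mulVec, dotProduct, Fin.sum_univ_two]
      linear_combination -(hg j)
    · simp [Cmat, mulVec, dotProduct, Fin.sum_univ_two]

lemma omegaPS_dvd_Hmat_mulVec_approxSol_sub
    (hg : ∀ j, F (j + 2) - (C a * F (j + 1) - PhiPS p A (j + 1) * F j) =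
      omegaPS p A (j + 1) * g j)
    (j k : ℕ) (i : Fin 2) :
    omegaPS p A (j + 1) ∣ (Hmat p A a (j + 1) *ᵥ approxSol p A a F g (j + k)
      - ![F (j + 1), -(PhiPS p A (j + 1) * F j)]) i := by
  induction k with
  | zero => simp [Hmat_mulVec_approxSol hg]
  | succ k ih =>
    obtain ⟨G, hG, -⟩ := exists_Hmat_add_eq_mul (p := p) (a := a) (j + 1) k
    rw [← add_assoc, approxSol, mulVec_add, add_sub_right_comm, Pi.add_apply,
      add_right_comm, hG, mulVec_smul, mulVec_mulVec, mul_adjugate_mul, smul_mulVec]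
    refine dvd_add ih ?_
    rw [omegaPS_eq_X_mul_det_Hmat (a := a)]
    simp only [Pi.smul_apply, smul_eq_mul]
    exact ⟨g (j + k) * (G.adjugate *ᵥ Pi.single 1 1) i, by ring⟩

theorem exists_isSharpFlat (hp : p.Prime) (ha : IsNilpotent a) (hpA : IsNilpotent (p : A))
    (hF : NormCompat p A a F) : ∃ v, IsSharpFlat p A a F v := by
  choose g hg using fun j => hF (j + 1) (Nat.le_add_left 1 j)
  obtain ⟨N, hN⟩ := isNilpotent_Bmat ha hpA
  have hN' : Bmat p a ^ (N + 1) = 0 := by rw [pow_succ, hN, zero_mul]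
  obtain ⟨S, hS⟩ := exists_forall_X_pow_dvd_sub (β := fun j => (j + 1) / (N + 1))
    (fun j k hjk => Nat.div_le_div_right (Nat.succ_le_succ hjk))
    (fun k => ⟨(N + 1) * (k + 1), by rw [Nat.lt_div_iff_mul_lt N.succ_pos]; lia⟩)
    (X_pow_dvd_approxSol_succ_sub hN')
  refine ⟨S, fun m hm i => ?_⟩
  obtain ⟨j, rfl⟩ := Nat.exists_eq_add_of_le' hm
  obtain ⟨K, hK⟩ := exists_omegaPS_dvd_X_pow hp hpA (j + 1)
  set J := j + (N + 1) * K
  have hlimit : ∀ i, omegaPS p A (j + 1) ∣ (S - approxSol p A a F g J) i := fun i =>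
    hK.trans ((pow_dvd_pow X (by rw [Nat.le_div_iff_mul_le N.succ_pos]; lia)).trans (hS J i))
  rw [Nat.add_sub_cancel, ← sub_add_sub_cancel _ (Hmat p A a (j + 1) *ᵥ approxSol p A a F g J),
    ← mulVec_sub, Pi.add_apply]
  exact dvd_add (dvd_mulVec_apply hlimit _ i)
    (omegaPS_dvd_Hmat_mulVec_approxSol_sub (fun j => by simpa using hg j) j _ i)

end Existence

theorem existsUnique_isSharpFlat {p : ℕ} (hp : p.Prime) {A : Type*} [CommRing A] {a : A}
    (ha : IsNilpotent a) (hpA : IsNilpotent (p : A)) {F : ℕ → A⟦X⟧} (hF : NormCompat p A a F) :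
    ∃! FP : A⟦X⟧ × A⟦X⟧, IsSharpFlat p A a F ![FP.1, FP.2] := by
  obtain ⟨v, hv⟩ := exists_isSharpFlat hp ha hpA hF
  have hv_eta : ![v 0, v 1] = v := by
    funext i
    fin_cases i <;> rfl
  refine ⟨(v 0, v 1), hv_eta ▸ hv, fun w hw => ?_⟩
  have hwv := IsSharpFlat.unique hp ha hpA hw hv
  exact Prod.ext (congrFun hwv 0) (congrFun hwv 1)

theorem sharp_flat_decomposition_mod_general
    (p : ℕ) (hp : p.Prime)
    (𝕆 : Type*) [CommRing 𝕆]
    (ϖ : 𝕆) (hpϖ : ϖ ∣ (p : 𝕆))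
    (n : ℕ) (a : 𝕆) (ha : ϖ ∣ a)
    (F : ℕ → PowerSeries (𝕆 ⧸ Ideal.span {ϖ ^ n}))
    (hF : NormCompat p (𝕆 ⧸ Ideal.span {ϖ ^ n})
      (Ideal.Quotient.mk (Ideal.span {ϖ ^ n}) a) F) :
    ∃! FP : PowerSeries (𝕆 ⧸ Ideal.span {ϖ ^ n}) × PowerSeries (𝕆 ⧸ Ideal.span {ϖ ^ n}),
      ∀ m : ℕ, 1 ≤ m → ∀ i : Fin 2,
        omegaPS p (𝕆 ⧸ Ideal.span {ϖ ^ n}) m ∣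
          ((Hmat p (𝕆 ⧸ Ideal.span {ϖ ^ n})
              (Ideal.Quotient.mk (Ideal.span {ϖ ^ n}) a) m).mulVec ![FP.1, FP.2] i -
            ![F m, -(PhiPS p (𝕆 ⧸ Ideal.span {ϖ ^ n}) m * F (m - 1))] i) := by
  have hnil : ∀ b : 𝕆, ϖ ∣ b → IsNilpotent (Ideal.Quotient.mk (Ideal.span {ϖ ^ n}) b) :=
    fun b hb => ⟨n, by
      rw [← map_pow, Ideal.Quotient.eq_zero_iff_mem, Ideal.mem_span_singleton]
      exact pow_dvd_pow_of_dvd hb n⟩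
  exact existsUnique_isSharpFlat hp (hnil a ha) (by simpa using hnil p hpϖ) hF

/-- Theorem 3.3 of the paper, case `R = Λ/(ϖⁿ)`: let `n ≥ 1`, let `ā`
be the image in `𝕆/ϖⁿ𝕆` of `a ∈ 𝕆` with `ϖ ∣ a`, and let `(F_m)` be a sequence in
`R_n = (𝕆/ϖⁿ𝕆)⟦X⟧` with `F_{m+1} ≡ ā·F_m − Φ̄_m·F_{m−1} (mod ω̄_m·R_n)` for all
`m ≥ 1`. Then there is a unique pair `(F^♯, F^♭) ∈ R_n × R_n` with
`H̄_m·(F^♯,F^♭)ᵀ ≡ (F_m, −Φ̄_m·F_{m−1})ᵀ (mod ω̄_m·R_n)` for every `m ≥ 1`. -/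
theorem sharp_flat_decomposition_mod
    (p : ℕ) (hp : p.Prime) (hp5 : 5 ≤ p)
    (𝕆 : Type*) [CommRing 𝕆] [IsDomain 𝕆] [IsDiscreteValuationRing 𝕆] [CharZero 𝕆]
    (ϖ : 𝕆) (hϖ : Irreducible ϖ) (hpϖ : ϖ ∣ (p : 𝕆))
    (n : ℕ) (hn : 1 ≤ n) (a : 𝕆) (ha : ϖ ∣ a)
    (F : ℕ → PowerSeries (𝕆 ⧸ Ideal.span {ϖ ^ n}))
    (hF : NormCompat p (𝕆 ⧸ Ideal.span {ϖ ^ n})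
      (Ideal.Quotient.mk (Ideal.span {ϖ ^ n}) a) F) :
    ∃! FP : PowerSeries (𝕆 ⧸ Ideal.span {ϖ ^ n}) × PowerSeries (𝕆 ⧸ Ideal.span {ϖ ^ n}),
      ∀ m : ℕ, 1 ≤ m → ∀ i : Fin 2,
        omegaPS p (𝕆 ⧸ Ideal.span {ϖ ^ n}) m ∣
          ((Hmat p (𝕆 ⧸ Ideal.span {ϖ ^ n})
              (Ideal.Quotient.mk (Ideal.span {ϖ ^ n}) a) m).mulVec ![FP.1, FP.2] i -
            ![F m, -(PhiPS p (𝕆 ⧸ Ideal.span {ϖ ^ n}) m * F (m - 1))] i) :=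
  sharp_flat_decomposition_mod_general p hp 𝕆 ϖ hpϖ n a ha F hF
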